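/- Let r₁ > r₂ > 0 and let ℓ ≈ 1.95 be the unique positive solution of 2(1+x³)(γ + ψ(1/(1+x))) + x² + x + 2(x² − x)ψ'(1/(1+x)) = 0. If x = r₁/r₂ > ℓ, then the coefficient L(r₁,r₂) = 2(r₁³+r₂³)(γ + ψ(r₂/(r₁+r₂))) + r₁²r₂ + r₂²r₁ + 2(r₁²r₂ − r₂²r₁)ψ'(r₂/(r₁+r₂)) is strictly positive. (Specifically: show that the function h(x) = 2(1+x³)(γ+ψ(1/(1+x))) + x² + x + 2(x²−x)ψ'(1/(1+x)) satisfies h(1) < 0 and h(x) → +∞ as x → ∞, so a positive root exists.) -/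

import Mathlib

open Real Filter

/-- The digamma function `ψ = Γ'/Γ`. -/
noncomputable def digamma (x : ℝ) : ℝ := deriv Real.Gamma x / Real.Gamma x

/-- The trigamma function `ψ'`. -/
noncomputable def trigamma (x : ℝ) : ℝ := deriv digamma x

/-- `h(x) = 2(1+x³)(γ + ψ(1/(1+x))) + x² + x + 2(x² − x)ψ'(1/(1+x))`. -/
noncomputable def hfun (x : ℝ) : ℝ :=
  2 * (1 + x ^ 3) * (Real.eulerMascheroniConstant + digamma (1 / (1 + x)))
    + x ^ 2 + x + 2 * (x ^ 2 - x) * trigamma (1 / (1 + x))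

/-- The first-order coefficient `L(r₁, r₂)` in the expansion of `Q₁`. -/
noncomputable def Lcoeff (r₁ r₂ : ℝ) : ℝ :=
  2 * (r₁ ^ 3 + r₂ ^ 3) * (Real.eulerMascheroniConstant + digamma (r₂ / (r₁ + r₂)))
    + r₁ ^ 2 * r₂ + r₂ ^ 2 * r₁
    + 2 * (r₁ ^ 2 * r₂ - r₂ ^ 2 * r₁) * trigamma (r₂ / (r₁ + r₂))

/-!
With `s = 1 / (1 + x)`, the recurrences `ψ (s + 1) = ψ s + 1 / s` and
`ψ' (s + 1) = ψ' s - 1 / s²` rewrite `h x` as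
`2 (1 + x³) (γ + ψ (s + 1)) + 2 (x² - x) ψ' (s + 1) - (x + 1) (x + 2)`.
For `x ≥ 1` we have `s ≤ 1 / 2`; the first term is nonnegative because `ψ` is increasing
(`log Γ` is convex) and `ψ 1 = -γ`, while
`ψ' (s + 1) ≥ 1 / (s + 1)² + 1 / (s + 2)² ≥ 136 / 225 > 1 / 2`, so `h` grows quadratically.
Being continuous with `ℓ` as its only positive zero, `h` is positive on `(ℓ, ∞)`, and
`L (r₁, r₂) = r₂³ h (r₁ / r₂)`. Finally `h 1 = 2 - 8 log 2 < 0` by `ψ (1 / 2) = -γ - 2 log 2`.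
-/

open Set

theorem contDiffAt_Gamma_of_pos {n : WithTop ℕ∞} {x : ℝ} (hx : 0 < x) :
    ContDiffAt ℝ n Real.Gamma x := by
  have hU : IsOpen {s : ℂ | 0 < s.re} := isOpen_lt continuous_const Complex.continuous_re
  have hdiff : DifferentiableOn ℂ Complex.Gamma {s : ℂ | 0 < s.re} := fun s hs =>
    (Complex.differentiableAt_Gamma s fun m h => by
      simp only [h, mem_ofPred_eq, Complex.neg_re, Complex.natCast_re] at hs
      linarith [m.cast_nonneg (α := ℝ)]).differentiableWithinAt
  have h :=
    ((hdiff.contDiffOn (n := n) hU).contDiffAt (hU.mem_nhds (by simpa using hx))).real_of_complex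
  simpa only [Complex.Gamma_ofReal, Complex.ofReal_re] using h

theorem contDiffAt_digamma {n : WithTop ℕ∞} {x : ℝ} (hx : 0 < x) : ContDiffAt ℝ n digamma x :=
  ((contDiffAt_Gamma_of_pos hx).derivWithin le_rfl).div (contDiffAt_Gamma_of_pos hx)
    (Real.Gamma_pos_of_pos hx).ne'

theorem hasDerivAt_digamma {x : ℝ} (hx : 0 < x) : HasDerivAt digamma (trigamma x) x :=
  ((contDiffAt_digamma (n := 1) hx).differentiableAt one_ne_zero).hasDerivAt

theorem continuousAt_trigamma {x : ℝ} (hx : 0 < x) : ContinuousAt trigamma x :=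
  ((contDiffAt_digamma (n := 1 + 1) hx).derivWithin le_rfl).continuousAt

theorem digamma_add_one {x : ℝ} (hx : 0 < x) : digamma (x + 1) = digamma x + x⁻¹ := by
  have hΓ := ((contDiffAt_Gamma_of_pos (n := 1) hx).differentiableAt one_ne_zero).hasDerivAt
  have hshift : (fun y => Real.Gamma (y + 1)) =ᶠ[nhds x] fun y => y * Real.Gamma y := by
    filter_upwards [eventually_ne_nhds hx.ne'] with y hy using Real.Gamma_add_one hy
  have hderiv : deriv Real.Gamma (x + 1) = Real.Gamma x + x * deriv Real.Gamma x := by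
    rw [← deriv_comp_add_const, hshift.deriv_eq, ← one_mul (Real.Gamma x)]
    exact ((hasDerivAt_id' x).mul hΓ).deriv
  have hΓx := (Real.Gamma_pos_of_pos hx).ne'
  rw [digamma, digamma, hderiv, Real.Gamma_add_one hx.ne']
  field_simp
  ring

theorem trigamma_add_one {x : ℝ} (hx : 0 < x) : trigamma (x + 1) = trigamma x - (x ^ 2)⁻¹ := by
  have hshift : (fun y => digamma (y + 1)) =ᶠ[nhds x] fun y => digamma y + y⁻¹ := by
    filter_upwards [eventually_gt_nhds hx] with y hy using digamma_add_one hy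
  rw [trigamma, ← deriv_comp_add_const, hshift.deriv_eq, sub_eq_add_neg]
  exact ((hasDerivAt_digamma hx).add (hasDerivAt_inv hx.ne')).deriv

theorem monotoneOn_digamma : MonotoneOn digamma (Ioi 0) := by
  have hderiv : ∀ x ∈ Ioi (0 : ℝ), HasDerivAt (Real.log ∘ Real.Gamma) (digamma x) x := fun x hx =>
    ((contDiffAt_Gamma_of_pos (n := 1) hx).differentiableAt one_ne_zero).hasDerivAt.log
      (Real.Gamma_pos_of_pos hx).ne'
  refine (Real.convexOn_log_Gamma.monotoneOn_deriv fun x hx => (hderiv x hx).differentiableAt).congr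
    fun x hx => (hderiv x hx).deriv

theorem trigamma_nonneg {x : ℝ} (hx : 0 < x) : 0 ≤ trigamma x := by
  rw [trigamma, ← derivWithin_of_isOpen isOpen_Ioi hx]
  exact monotoneOn_digamma.derivWithin_nonneg

theorem inv_sq_add_inv_sq_le_trigamma {x : ℝ} (hx : 0 < x) :
    (x ^ 2)⁻¹ + ((x + 1) ^ 2)⁻¹ ≤ trigamma x := by
  have h₁ := trigamma_add_one hx
  have h₂ := trigamma_add_one (x := x + 1) (by linarith)
  linarith [trigamma_nonneg (x := x + 1 + 1) (by linarith)]

theorem digamma_one : digamma 1 = -Real.eulerMascheroniConstant := by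
  rw [digamma, Real.hasDerivAt_Gamma_one.deriv, Real.Gamma_one, div_one]

theorem digamma_one_half : digamma (1 / 2) = -(Real.eulerMascheroniConstant + 2 * Real.log 2) := by
  have hπ : 0 < √π := Real.sqrt_pos.mpr Real.pi_pos
  rw [digamma, Real.hasDerivAt_Gamma_one_half.deriv, Real.Gamma_one_half_eq]
  field_simp

theorem hfun_eq_shift {x : ℝ} (hx : -1 < x) :
    hfun x = 2 * (1 + x ^ 3) *
        (Real.eulerMascheroniConstant + digamma (1 / (1 + x) + 1))
      + 2 * (x ^ 2 - x) * trigamma (1 / (1 + x) + 1) - (x + 1) * (x + 2) := by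
  have hs : 0 < 1 / (1 + x) := by rw [one_div_pos]; linarith
  have hinv : (1 / (1 + x))⁻¹ = 1 + x := by rw [one_div, inv_inv]
  rw [hfun, digamma_add_one hs, trigamma_add_one hs, ← inv_pow, hinv]
  ring

theorem le_hfun_of_one_le {x : ℝ} (hx : 1 ≤ x) :
    272 / 225 * (x ^ 2 - x) - (x + 1) * (x + 2) ≤ hfun x := by
  set s := 1 / (1 + x) with hs_def
  have hs : 0 < s := by rw [hs_def, one_div_pos]; linarith
  have hs_le : s ≤ 1 / 2 := by rw [hs_def]; gcongr; linarith
  have hψ : 0 ≤ Real.eulerMascheroniConstant + digamma (s + 1) := by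
    have := monotoneOn_digamma (mem_Ioi.2 one_pos) (mem_Ioi.2 (by linarith : (0 : ℝ) < s + 1))
      (by linarith)
    rw [digamma_one] at this
    linarith
  have hψ' : 136 / 225 ≤ trigamma (s + 1) := by
    have h₁ : 4 / 9 ≤ ((s + 1) ^ 2)⁻¹ := by
      rw [← one_div, div_le_div_iff₀ (by norm_num) (by positivity)]; nlinarith
    have h₂ : 4 / 25 ≤ ((s + 1 + 1) ^ 2)⁻¹ := by
      rw [← one_div, div_le_div_iff₀ (by norm_num) (by positivity)]; nlinarith
    linarith [inv_sq_add_inv_sq_le_trigamma (x := s + 1) (by linarith)]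
  have hcubic : 0 ≤ 2 * (1 + x ^ 3) := by positivity
  have hquad : 0 ≤ 2 * (x ^ 2 - x) := by nlinarith
  rw [hfun_eq_shift (by linarith), ← hs_def]
  nlinarith [mul_nonneg hcubic hψ, mul_le_mul_of_nonneg_left hψ' hquad]

theorem tendsto_hfun_atTop : Tendsto hfun atTop atTop := by
  have hpoly : Tendsto (fun x : ℝ => x * (47 / 225 * x - 947 / 225) - 2) atTop atTop :=
    tendsto_atTop_add_const_right _ _ (tendsto_id.atTop_mul_atTop₀
      (tendsto_atTop_add_const_right _ _ (tendsto_id.const_mul_atTop (by norm_num))))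
  refine tendsto_atTop_mono' atTop ?_ hpoly
  filter_upwards [eventually_ge_atTop 1] with x hx
  linarith [le_hfun_of_one_le hx]

theorem continuousOn_hfun : ContinuousOn hfun (Ioi (-1)) := by
  intro x hx
  have hx₁ : 0 < 1 + x := by linarith [mem_Ioi.1 hx]
  have hs : ContinuousAt (fun t : ℝ => 1 / (1 + t)) x := by fun_prop (disch := exact hx₁.ne')
  have hs₀ : 0 < 1 / (1 + x) := one_div_pos.2 hx₁
  have hψ := (contDiffAt_digamma (n := 0) hs₀).continuousAt.comp (f := fun t => 1 / (1 + t)) hs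
  have hψ' := (continuousAt_trigamma hs₀).comp (f := fun t => 1 / (1 + t)) hs
  refine ContinuousAt.continuousWithinAt ?_
  unfold hfun
  fun_prop

theorem hfun_one : hfun 1 = 2 - 8 * Real.log 2 := by
  rw [hfun, show (1 : ℝ) / (1 + 1) = 1 / 2 by norm_num, digamma_one_half]
  ring

theorem Lcoeff_eq_mul_hfun {r₁ r₂ : ℝ} (hr₂ : r₂ ≠ 0) : Lcoeff r₁ r₂ = r₂ ^ 3 * hfun (r₁ / r₂) := by
  have harg : r₂ / (r₁ + r₂) = 1 / (1 + r₁ / r₂) := by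
    rw [one_add_div hr₂, one_div_div, add_comm]
  rw [Lcoeff, hfun, ← harg]
  field_simp
  ring

theorem pos_of_tendsto_atTop_of_ne_zero {f : ℝ → ℝ} {x : ℝ} (hf : ContinuousOn f (Ici x))
    (htop : Tendsto f atTop atTop) (hne : ∀ t ≥ x, f t ≠ 0) : 0 < f x := by
  by_contra! hle
  obtain ⟨y, hy_pos, hxy⟩ := ((htop.eventually_gt_atTop 0).and (eventually_ge_atTop x)).exists
  obtain ⟨t, ht, hft⟩ := intermediate_value_Icc hxy (hf.mono Icc_subset_Ici_self)
    ⟨hle, hy_pos.le⟩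
  exact hne t ht.1 hft

theorem coefficient_positive_general (ℓ : ℝ) (huniq : ∀ t > (0 : ℝ), hfun t = 0 → t = ℓ) :
    hfun 1 < 0 ∧ Tendsto hfun atTop atTop ∧
      ∀ r₁ r₂ : ℝ, 0 < r₂ → r₂ < r₁ → ℓ < r₁ / r₂ → 0 < Lcoeff r₁ r₂ := by
  refine ⟨?_, tendsto_hfun_atTop, fun r₁ r₂ hr₂ hr₁₂ hℓ => ?_⟩
  · rw [hfun_one]
    linarith [Real.log_two_gt_d9]
  have hx : 1 < r₁ / r₂ := (one_lt_div hr₂).2 hr₁₂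
  have hpos : 0 < hfun (r₁ / r₂) :=
    pos_of_tendsto_atTop_of_ne_zero (continuousOn_hfun.mono (Ici_subset_Ioi.2 (by linarith)))
      tendsto_hfun_atTop fun t ht h0 => (hℓ.trans_le ht).ne' (huniq t (by linarith) h0)
  rw [Lcoeff_eq_mul_hfun hr₂.ne']
  exact mul_pos (pow_pos hr₂ 3) hpos

theorem coefficient_positive (ℓ : ℝ) (hℓpos : 0 < ℓ) (hroot : hfun ℓ = 0)
    (huniq : ∀ t > (0 : ℝ), hfun t = 0 → t = ℓ) :
    hfun 1 < 0 ∧ Tendsto hfun atTop atTop ∧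
      ∀ r₁ r₂ : ℝ, 0 < r₂ → r₂ < r₁ → ℓ < r₁ / r₂ → 0 < Lcoeff r₁ r₂ :=
  coefficient_positive_general ℓ huniq
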